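/- Let F be a consular election rule satisfying SPP and SPO. Then the range graph 𝒢(F) satisfies edge-connectivity: whenever {a,b} and {c,d} are edges of 𝒢(F) with {a,b} ∩ {c,d} = ∅, then ({a,c} is an edge of 𝒢(F) or {a,d} is an edge of 𝒢(F)) and ({b,c} is an edge of 𝒢(F) or {b,d} is an edge of 𝒢(F)). -/

import Mathlib

open Function

/-- A ballot is a strict linear order on the set of alternatives. -/
abbrev Ballot (A : Type*) := LinearOrder A

/-- A profile assigns a ballot to each voter. -/
abbrev Profile (V A : Type*) := V → Ballot A

variable {V A : Type*}

/-- The best (greatest) element of `W` under ballot `L` (junk value if `W` is empty). -/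
noncomputable def bestIn [Nonempty A] (L : Ballot A) (W : Finset A) : A :=
  if h : W.Nonempty then @Finset.max' A L W h else Classical.arbitrary A

/-- The worst (least) element of `W` under ballot `L` (junk value if `W` is empty). -/
noncomputable def worstIn [Nonempty A] (L : Ballot A) (W : Finset A) : A :=
  if h : W.Nonempty then @Finset.min' A L W h else Classical.arbitrary A

/-- Strategy-proofness for optimists. -/
def SPO [DecidableEq V] [Nonempty A] (F : Profile V A → Finset A) : Prop :=
  ∀ (P : Profile V A) (i : V) (Pi' : Ballot A),
    (P i).le (bestIn (P i) (F (Function.update P i Pi'))) (bestIn (P i) (F P))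

/-- Strategy-proofness for pessimists. -/
def SPP [DecidableEq V] [Nonempty A] (F : Profile V A → Finset A) : Prop :=
  ∀ (P : Profile V A) (i : V) (Pi' : Ballot A),
    (P i).le (worstIn (P i) (F (Function.update P i Pi'))) (worstIn (P i) (F P))

/-- `F` is weakly viable if every alternative is on some winning committee. -/
def WeaklyViable (F : Profile V A → Finset A) : Prop :=
  ∀ a : A, ∃ P : Profile V A, a ∈ F P

/-- `F` is Marian if some alternative is on every winning committee. -/
def Marian (F : Profile V A → Finset A) : Prop :=
  ∃ m : A, ∀ P : Profile V A, m ∈ F P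

/-- restriction of a ballot to a subset of alternatives -/
def restrictBallot (L : Ballot A) (B : Finset A) : Ballot {x // x ∈ B} :=
  @LinearOrder.lift' _ A L (fun x => (x : A)) Subtype.val_injective

/-- A consular rule is reducible if it is the disjoint union of two social choice functions. -/
def Reducible [Fintype A] [DecidableEq A] (F : Profile V A → Finset A) : Prop :=
  ∃ B C : Finset A, B.Nonempty ∧ C.Nonempty ∧ Disjoint B C ∧ B ∪ C = Finset.univ ∧
    ∃ (G : Profile V {x // x ∈ B} → {x // x ∈ B}) (H : Profile V {x // x ∈ C} → {x // x ∈ C}),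
      ∀ P : Profile V A,
        F P = {((G (fun i => restrictBallot (P i) B)) : A), ((H (fun i => restrictBallot (P i) C)) : A)}

/-- The range graph of a consular election rule. -/
def rangeGraph [DecidableEq A] (F : Profile V A → Finset A) : SimpleGraph A where
  Adj a b := a ≠ b ∧ ∃ P : Profile V A, F P = {a, b}
  symm := by
    constructor
    rintro a b ⟨hab, P, hP⟩
    exact ⟨hab.symm, P, by rwa [Finset.pair_comm]⟩
  loopless := by constructor; rintro a ⟨h, -⟩; exact h rfl

/-- `t` is ranked immediately above `s` in ballot `L`. -/
def JustAbove (L : Ballot A) (s t : A) : Prop :=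
  L.lt s t ∧ ∀ z, ¬ (L.lt s z ∧ L.lt z t)

/-- The ballot obtained from `L` by transposing the alternatives `s` and `t`. -/
def swapBallot [DecidableEq A] (L : Ballot A) (s t : A) : Ballot A :=
  @LinearOrder.lift' A A L (Equiv.swap s t) (Equiv.injective _)

/-- `L'` is obtained from `L` by moving `s` up. -/
def MovedUp (L L' : Ballot A) (s : A) : Prop :=
  (∀ x y, x ≠ s → y ≠ s → (L'.lt x y ↔ L.lt x y)) ∧ ∀ x, L.lt x s → L'.lt x s

/-- `L'` is obtained from `L` by moving `s` down. -/
def MovedDown (L L' : Ballot A) (s : A) : Prop :=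
  (∀ x y, x ≠ s → y ≠ s → (L'.lt x y ↔ L.lt x y)) ∧ ∀ x, L.lt s x → L'.lt s x

/-- Strategy-proofness of a single-winner social choice function. -/
def SCFStrategyProof {B : Type*} [DecidableEq V] (G : Profile V B → B) : Prop :=
  ∀ (Q : Profile V B) (i : V) (Qi' : Ballot B),
    (Q i).le (G (Function.update Q i Qi')) (G Q)

/-- Edge-connectivity of a graph. -/
def EdgeConnectivity {X : Type*} (G : SimpleGraph X) : Prop :=
  ∀ a b c d : X, G.Adj a b → G.Adj c d → a ≠ c → a ≠ d → b ≠ c → b ≠ d →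
    (G.Adj a c ∨ G.Adj a d) ∧ (G.Adj b c ∨ G.Adj b d)


section Aux

variable {V A : Type*}

lemma lem_trans (L : Ballot A) {x y z : A} (h1 : L.le x y) (h2 : L.le y z) : L.le x z := by
  letI := L; exact le_trans h1 h2

lemma lem_antisymm (L : Ballot A) {x y : A} (h1 : L.le x y) (h2 : L.le y x) : x = y := by
  letI := L; exact le_antisymm h1 h2

lemma lem_refl (L : Ballot A) (x : A) : L.le x x := by letI := L; exact le_refl x

lemma bestIn_mem [Nonempty A] (L : Ballot A) {W : Finset A} (h : W.Nonempty) :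
    bestIn L W ∈ W := by
  rw [bestIn, dif_pos h]; exact @Finset.max'_mem A L W h

lemma le_bestIn [Nonempty A] (L : Ballot A) {W : Finset A} {x : A} (hx : x ∈ W) :
    L.le x (bestIn L W) := by
  rw [bestIn, dif_pos ⟨x, hx⟩]; exact @Finset.le_max' A L W x hx

lemma worstIn_mem [Nonempty A] (L : Ballot A) {W : Finset A} (h : W.Nonempty) :
    worstIn L W ∈ W := by
  rw [worstIn, dif_pos h]; exact @Finset.min'_mem A L W h

lemma worstIn_le [Nonempty A] (L : Ballot A) {W : Finset A} {x : A} (hx : x ∈ W) :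
    L.le (worstIn L W) x := by
  rw [worstIn, dif_pos ⟨x, hx⟩]; exact @Finset.min'_le A L W x hx

/-- Top lemma: if `a` is at the top of voter `i`'s new ballot and `a ∈ F P`,
then `a` remains chosen. -/
lemma top_lemma [DecidableEq V] [Nonempty A] {F : Profile V A → Finset A}
    (hne : ∀ P, (F P).Nonempty) (hSPO : SPO F) (P : Profile V A) (i : V) (L' : Ballot A)
    {a : A} (htop : ∀ x, L'.le x a) (ha : a ∈ F P) : a ∈ F (Function.update P i L') := by
  have h := hSPO (Function.update P i L') i (P i)
  rw [Function.update_self] at h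
  simp only [Function.update_idem, Function.update_eq_self, Function.update_self] at h
  have h1 : L'.le a (bestIn L' (F (Function.update P i L'))) :=
    lem_trans L' (le_bestIn L' ha) h
  have h2 : L'.le (bestIn L' (F (Function.update P i L'))) a := htop _
  have heq : bestIn L' (F (Function.update P i L')) = a := lem_antisymm L' h2 h1
  rw [← heq]; exact bestIn_mem L' (hne _)

/-- Worst lemma: when voter `i` adopts ballot `L'`, the worst outcome according to `L'`
weakly improves. -/
lemma worst_lemma [DecidableEq V] [Nonempty A] {F : Profile V A → Finset A}
    (hSPP : SPP F) (P : Profile V A) (i : V) (L' : Ballot A) :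
    L'.le (worstIn L' (F P)) (worstIn L' (F (Function.update P i L'))) := by
  have h := hSPP (Function.update P i L') i (P i)
  rw [Function.update_self] at h
  simpa only [Function.update_idem, Function.update_eq_self, Function.update_self] using h

lemma mix_insert [DecidableEq V] (Q : Profile V A) (L : Ballot A) (S : Finset V) (j : V) :
    (fun i => if i ∈ insert j S then L else Q i) =
      Function.update (fun i => if i ∈ S then L else Q i) j L := by
  funext i
  rcases eq_or_ne i j with rfl | h
  · simp
  · simp [Function.update_of_ne h, Finset.mem_insert, h]

lemma chain_top [DecidableEq V] [Nonempty A] {F : Profile V A → Finset A}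
    (hne : ∀ P, (F P).Nonempty) (hSPO : SPO F) (L : Ballot A) {a : A}
    (htop : ∀ x, L.le x a) (Q : Profile V A) (ha : a ∈ F Q) (S : Finset V) :
    a ∈ F (fun i => if i ∈ S then L else Q i) := by
  induction S using Finset.induction_on with
  | empty => simpa using ha
  | @insert j S hj ih =>
      rw [mix_insert]
      exact top_lemma hne hSPO _ j L htop ih

lemma chain_worst [DecidableEq V] [Nonempty A] {F : Profile V A → Finset A}
    (hSPP : SPP F) (L : Ballot A) (Q : Profile V A) (S : Finset V) :
    L.le (worstIn L (F Q)) (worstIn L (F (fun i => if i ∈ S then L else Q i))) := by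
  induction S using Finset.induction_on with
  | empty => simpa using lem_refl L _
  | @insert j S hj ih =>
      rw [mix_insert]
      exact lem_trans L ih (worst_lemma hSPP _ j L)

/-- A ballot with `t` on top, `c` second, `d` third. We only need the stated order facts. -/
lemma exists_special [Fintype A] [DecidableEq A] {t c d : A}
    (htc : t ≠ c) (htd : t ≠ d) (hcd : c ≠ d) :
    ∃ L : Ballot A, (∀ x, L.le x t) ∧ L.le d c ∧
      (∀ x, L.le d x → x = t ∨ x = c ∨ x = d) := by
  classical
  let e := Fintype.equivFin A
  let N := Fintype.card A
  let f : A → ℕ := fun x =>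
    if x = t then N + 3 else if x = c then N + 2 else if x = d then N + 1 else (e x : ℕ)
  have hbound : ∀ x : A, (e x : ℕ) < N := fun x => (e x).isLt
  have hf : Function.Injective f := by
    intro x y h
    have hx := hbound x
    have hy := hbound y
    simp only [f] at h
    split_ifs at h <;>
      first
        | (subst_vars; rfl)
        | omega
        | exact e.injective (Fin.val_injective h)
  have hfd : f d = N + 1 := by simp [f, htd.symm, hcd.symm]
  have hfc : f c = N + 2 := by simp [f, htc.symm]
  have hft : f t = N + 3 := by simp [f]
  refine ⟨LinearOrder.lift' f hf, ?_, ?_, ?_⟩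
  · intro x
    show f x ≤ f t
    rw [hft]
    have := hbound x
    simp only [f]
    split_ifs <;> omega
  · show f d ≤ f c
    rw [hfd, hfc]
    omega
  · intro x hx
    have hx' : f d ≤ f x := hx
    rw [hfd] at hx'
    by_contra hcon
    push_neg at hcon
    obtain ⟨h1, h2, h3⟩ := hcon
    have hfx : f x = (e x : ℕ) := by simp [f, h1, h2, h3]
    rw [hfx] at hx'
    have := hbound x
    omega

/-- Key lemma: if `a` is in the range and `{c,d}` is achieved, with `a,c,d` distinct,
then `{a,c}` or `{a,d}` is achieved. -/
lemma key_lemma {V A : Type*} [Fintype V] [DecidableEq V] [Fintype A] [DecidableEq A]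
    [Nonempty A] {F : Profile V A → Finset A} (hcomm : ∀ P, (F P).card = 2)
    (hSPP : SPP F) (hSPO : SPO F) {a c d : A}
    (hac : a ≠ c) (had : a ≠ d) (hcd : c ≠ d)
    {P Q : Profile V A} (hP : a ∈ F P) (hQ : F Q = {c, d}) :
    (rangeGraph F).Adj a c ∨ (rangeGraph F).Adj a d := by
  classical
  have hne : ∀ R, (F R).Nonempty := fun R => Finset.card_pos.mp (by rw [hcomm R]; norm_num)
  obtain ⟨L, htop, hdc, hclass⟩ := exists_special hac had hcd
  set R : Profile V A := fun _ => L with hR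
  have hRmix : R = fun i => if i ∈ (Finset.univ : Finset V) then L else P i := by
    funext i; simp [hR]
  have hRmix' : R = fun i => if i ∈ (Finset.univ : Finset V) then L else Q i := by
    funext i; simp [hR]
  have haR : a ∈ F R := by
    rw [hRmix]; exact chain_top hne hSPO L htop P hP Finset.univ
  -- worst element of F Q is ≥ d
  have hwQ : L.le d (worstIn L (F Q)) := by
    set w := worstIn L (F Q) with hw
    have hmem : w ∈ F Q := worstIn_mem L (hne Q)
    rw [hQ] at hmem
    rcases Finset.mem_insert.mp hmem with h | h
    · rw [h]; exact hdc
    · rw [Finset.mem_singleton.mp h]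
  have hwR : L.le d (worstIn L (F R)) := by
    rw [hRmix']
    exact lem_trans L hwQ (chain_worst hSPP L Q Finset.univ)
  have hall : ∀ x ∈ F R, L.le d x := fun x hx => lem_trans L hwR (worstIn_le L hx)
  -- classify
  obtain ⟨u, v, huv, hFR⟩ := Finset.card_eq_two.mp (hcomm R)
  have haM : a = u ∨ a = v := by
    have := haR; rw [hFR] at this; simpa using this
  have finish : ∀ x : A, x ≠ a → F R = {a, x} →
      (rangeGraph F).Adj a c ∨ (rangeGraph F).Adj a d := by
    intro x hxa hFR'
    have hxd : L.le d x := hall x (by rw [hFR']; simp)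
    rcases hclass x hxd with rfl | rfl | rfl
    · exact absurd rfl hxa
    · exact Or.inl ⟨hac, R, hFR'⟩
    · exact Or.inr ⟨had, R, hFR'⟩
  rcases haM with rfl | rfl
  · exact finish v (fun h => huv h.symm) hFR
  · exact finish u (fun h => huv h) (by rw [hFR, Finset.pair_comm])

end Aux

/-- the range graph of a consular election rule satisfying SPP and SPO is
edge-connected. -/
theorem statement_15 {V A : Type*} [Fintype V] [Nonempty V] [DecidableEq V] [Fintype A] [DecidableEq A] [Nonempty A]
    (F : Profile V A → Finset A) (hcomm : ∀ P, (F P).card = 2)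
    (hSPP : SPP F) (hSPO : SPO F) :
    EdgeConnectivity (rangeGraph F) := by
  intro a b c d hab hcd hac had hbc hbd
  obtain ⟨hab', P, hP⟩ := hab
  obtain ⟨hcd', Q, hQ⟩ := hcd
  have haP : a ∈ F P := by rw [hP]; simp
  have hbP : b ∈ F P := by rw [hP]; simp
  exact ⟨key_lemma hcomm hSPP hSPO hac had hcd' haP hQ,
    key_lemma hcomm hSPP hSPO hbc hbd hcd' hbP hQ⟩
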